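/- Let X, Y ∈ S^n_{++}, τ, κ > 0, σ ∈ ℝ, and set μ = (Tr(XY) + τκ)/(n+1). Suppose (ΔX, Δy, ΔY, Δτ, Δκ) ∈ S^n × ℝ^m × S^n × ℝ × ℝ satisfies the dual-HKM system with zero residuals: Y^{1/2}(XΔY + ΔX Y)Y^{−1/2} + Y^{−1/2}(ΔY X + Y ΔX)Y^{1/2} = 2(σμ I − Y^{1/2} X Y^{1/2}); κΔτ + τΔκ = σμ − τκ; Tr(A_i ΔX) − b_i Δτ = 0 for all i; ∑ Δy_i A_i + ΔY = 0; Δκ − b^T Δy = 0. Put X̂ = diag(X, τ), Ŷ = diag(Y, κ), ΔX̂ = diag(ΔX, Δτ), ΔŶ = diag(ΔY, Δκ), μ̂ = Tr(X̂Ŷ)/(n+1). Then μ̂ = μ, Ŷ^{1/2}(X̂ΔŶ + ΔX̂ Ŷ)Ŷ^{−1/2} + Ŷ^{−1/2}(ΔŶ X̂ + Ŷ ΔX̂)Ŷ^{1/2} = 2(σμ̂ I − Ŷ^{1/2} X̂ Ŷ^{1/2}), and Â(ΔX̂) + B̂(ΔŶ) = 0. -/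

import Mathlib

open Matrix BigOperators

noncomputable section

/-- Real square matrices of size `k`. -/
abbrev Mat (k : ℕ) : Type := Matrix (Fin k) (Fin k) ℝ

/-- `dgE P q` is the block-diagonal `(n+1) × (n+1)` matrix `diag(P, q)`. -/
def dgE {n : ℕ} (P : Mat n) (q : ℝ) : Mat (n + 1) :=
  Matrix.of fun i j =>
    if hi : (i : ℕ) < n then
      (if hj : (j : ℕ) < n then P ⟨i, hi⟩ ⟨j, hj⟩ else 0)
    else (if (j : ℕ) < n then 0 else q)

/-- Index type for `ℝ^{ñ₁}`, split as the first `m` coordinates, the next `n`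
coordinates, and the last `ñ+1−m` (here `k`) coordinates; `ñ₁ = m + n + (ñ+1−m)`. -/
abbrev SIdx (n m k : ℕ) : Type := Fin m ⊕ Fin n ⊕ Fin k

/-- The linear map `Â : S^{n+1} → ℝ^{ñ₁}` of the sSDLCP. -/
def Ahat {n m k : ℕ} (A : Fin m → Mat n) (b : Fin m → ℝ) (Xh : Mat (n + 1)) :
    SIdx n m k → ℝ
  | Sum.inl i => (dgE (A i) (-(b i)) * Xh).trace
  | Sum.inr (Sum.inl i) => Xh i.castSucc (Fin.last n)
  | Sum.inr (Sum.inr _) => 0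

/-- The linear map `B̂ : S^{n+1} → ℝ^{ñ₁}` of the sSDLCP, where `dd` is the vector `d`. -/
def Bhat {n m k : ℕ} (B : Fin k → Mat n) (dd : Fin k → ℝ) (Yh : Mat (n + 1)) :
    SIdx n m k → ℝ
  | Sum.inl _ => 0
  | Sum.inr (Sum.inl _) => 0
  | Sum.inr (Sum.inr j) => (dgE (B j) (dd j) * Yh).trace


open Classical in
/-- `psqrt M` is the (unique) positive semidefinite square root of `M` when `M` is
positive semidefinite, and the junk value `0` otherwise.  For positive definite `M`
this is the unique positive definite square root `M^{1/2}`. -/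
def psqrt {k : ℕ} (M : Mat k) : Mat k :=
  if h : M.PosSemidef then
    (h.1.eigenvectorUnitary : Mat k) * diagonal (fun i => Real.sqrt (h.1.eigenvalues i))
      * (star h.1.eigenvectorUnitary : Mat k)
  else 0

section AuxLemmas

variable {n : ℕ}

lemma dgE_cc (P : Mat n) (q : ℝ) (i j : Fin n) :
    dgE P q i.castSucc j.castSucc = P i j := by
  simp [dgE, i.is_lt, j.is_lt]

lemma dgE_cl (P : Mat n) (q : ℝ) (i : Fin n) :
    dgE P q i.castSucc (Fin.last n) = 0 := by
  simp [dgE, i.is_lt]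

lemma dgE_lc (P : Mat n) (q : ℝ) (j : Fin n) :
    dgE P q (Fin.last n) j.castSucc = 0 := by
  simp [dgE, j.is_lt]

lemma dgE_ll (P : Mat n) (q : ℝ) :
    dgE P q (Fin.last n) (Fin.last n) = q := by
  simp [dgE]

lemma dgE_mul (P R : Mat n) (q s : ℝ) :
    dgE P q * dgE R s = dgE (P * R) (q * s) := by
  ext i j
  rw [Matrix.mul_apply]
  induction i using Fin.lastCases with
  | last =>
    induction j using Fin.lastCases with
    | last => rw [Fin.sum_univ_castSucc]; simp [dgE_ll, dgE_lc, dgE_cl]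
    | cast j => rw [Fin.sum_univ_castSucc]; simp [dgE_ll, dgE_lc, dgE_cl]
  | cast i =>
    induction j using Fin.lastCases with
    | last => rw [Fin.sum_univ_castSucc]; simp [dgE_ll, dgE_lc, dgE_cl, dgE_cc]
    | cast j =>
      rw [Fin.sum_univ_castSucc]
      simp [dgE_ll, dgE_lc, dgE_cl, dgE_cc, Matrix.mul_apply]

lemma dgE_add (P R : Mat n) (q s : ℝ) :
    dgE P q + dgE R s = dgE (P + R) (q + s) := by
  ext i j
  induction i using Fin.lastCases with
  | last =>
    induction j using Fin.lastCases with
    | last => simp [dgE_ll]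
    | cast j => simp [dgE_lc]
  | cast i =>
    induction j using Fin.lastCases with
    | last => simp [dgE_cl]
    | cast j => simp [dgE_cc]

lemma dgE_smul (c : ℝ) (P : Mat n) (q : ℝ) :
    c • dgE P q = dgE (c • P) (c * q) := by
  ext i j
  induction i using Fin.lastCases with
  | last =>
    induction j using Fin.lastCases with
    | last => simp [dgE_ll]
    | cast j => simp [dgE_lc]
  | cast i =>
    induction j using Fin.lastCases with
    | last => simp [dgE_cl]
    | cast j => simp [dgE_cc]

lemma dgE_sub (P R : Mat n) (q s : ℝ) :
    dgE P q - dgE R s = dgE (P - R) (q - s) := by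
  ext i j
  induction i using Fin.lastCases with
  | last =>
    induction j using Fin.lastCases with
    | last => simp [dgE_ll]
    | cast j => simp [dgE_lc]
  | cast i =>
    induction j using Fin.lastCases with
    | last => simp [dgE_cl]
    | cast j => simp [dgE_cc]

lemma dgE_one : dgE (1 : Mat n) 1 = 1 := by
  ext i j
  induction i using Fin.lastCases with
  | last =>
    induction j using Fin.lastCases with
    | last => simp [dgE_ll]
    | cast j => simp [dgE_lc, Matrix.one_apply, (Fin.castSucc_lt_last j).ne']
  | cast i =>
    induction j using Fin.lastCases with
    | last => simp [dgE_cl, Matrix.one_apply, (Fin.castSucc_lt_last i).ne]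
    | cast j => simp [dgE_cc, Matrix.one_apply, Fin.castSucc_inj]

lemma dgE_trace (P : Mat n) (q : ℝ) :
    (dgE P q).trace = P.trace + q := by
  simp only [Matrix.trace, Matrix.diag]
  rw [Fin.sum_univ_castSucc]
  simp [dgE_cc, dgE_ll]

lemma dgE_transpose (P : Mat n) (q : ℝ) :
    (dgE P q)ᵀ = dgE Pᵀ q := by
  ext i j
  induction i using Fin.lastCases with
  | last =>
    induction j using Fin.lastCases with
    | last => simp [dgE_ll]
    | cast j => simp [dgE_lc, dgE_cl]
  | cast i =>
    induction j using Fin.lastCases with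
    | last => simp [dgE_cl, dgE_lc]
    | cast j => simp [dgE_cc]

variable {k : ℕ}

open scoped MatrixOrder

lemma psqrt_eq {M : Mat k} (h : M.PosSemidef) : psqrt M = CFC.sqrt M := by
  have h0 : (0 : Mat k) ≤ M := Matrix.nonneg_iff_posSemidef.mpr h
  rw [CFC.sqrt_eq_real_sqrt M h0, cfcₙ_eq_cfc, h.1.cfc_eq, psqrt, dif_pos h]
  rfl

lemma psqrt_mul_self {M : Mat k} (h : M.PosSemidef) : psqrt M * psqrt M = M := by
  rw [psqrt_eq h]; exact CFC.sqrt_mul_sqrt_self M (Matrix.nonneg_iff_posSemidef.mpr h)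

lemma psqrt_posSemidef {M : Mat k} (h : M.PosSemidef) : (psqrt M).PosSemidef := by
  rw [psqrt_eq h]; exact Matrix.nonneg_iff_posSemidef.mp (CFC.sqrt_nonneg M)

lemma psqrt_transpose {M : Mat k} (h : M.PosSemidef) : (psqrt M)ᵀ = psqrt M := by
  have := (psqrt_posSemidef h).isHermitian
  rw [Matrix.IsHermitian, Matrix.conjTranspose] at this
  exact (Matrix.conjTranspose_eq_transpose_of_trivial _).symm.trans (psqrt_posSemidef h).isHermitian

lemma dgE_posSemidef {Y : Mat n} {κ : ℝ} (hY : Y.PosSemidef) (hκ : 0 ≤ κ) :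
    (dgE Y κ).PosSemidef := by
  set U : Mat (n+1) := dgE (psqrt Y) (Real.sqrt κ) with hU
  have hUH : Uᴴ = U := by
    rw [Matrix.conjTranspose]
    simp only [hU, dgE_transpose, psqrt_transpose hY]
    ext i j; simp
  have : dgE Y κ = Uᴴ * U := by
    rw [hUH, hU, dgE_mul, psqrt_mul_self hY, Real.mul_self_sqrt hκ]
  rw [this]
  exact Matrix.posSemidef_conjTranspose_mul_self U

lemma psqrt_dgE {Y : Mat n} {κ : ℝ} (hY : Y.PosSemidef) (hκ : 0 ≤ κ) :
    psqrt (dgE Y κ) = dgE (psqrt Y) (Real.sqrt κ) := by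
  have h1 : (dgE Y κ).PosSemidef := dgE_posSemidef hY hκ
  have h2 : (dgE (psqrt Y) (Real.sqrt κ)).PosSemidef :=
    dgE_posSemidef (psqrt_posSemidef hY) (Real.sqrt_nonneg κ)
  rw [psqrt_eq h1]
  refine CFC.sqrt_unique ?_ (Matrix.nonneg_iff_posSemidef.mpr h2)
  rw [dgE_mul, psqrt_mul_self hY, Real.mul_self_sqrt hκ]

lemma psqrt_det_isUnit {M : Mat k} (h : M.PosDef) : IsUnit (psqrt M).det := by
  have h2 : (psqrt M).det * (psqrt M).det = M.det := by
    rw [← Matrix.det_mul, psqrt_mul_self h.posSemidef]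
  have := h.det_pos
  refine Ne.isUnit fun h0 => ?_
  rw [h0, mul_zero] at h2; linarith

lemma dgE_inv {S : Mat n} {s : ℝ} (hS : IsUnit S.det) (hs : s ≠ 0) :
    (dgE S s)⁻¹ = dgE S⁻¹ s⁻¹ := by
  apply Matrix.inv_eq_right_inv
  rw [dgE_mul, Matrix.mul_nonsing_inv _ hS, mul_inv_cancel₀ hs, dgE_one]

end AuxLemmas

/-- A solution of the dual-HKM corrector system (zero residuals) for
the homogeneous feasibility model yields, via block-diagonal embedding, a solution of
the corresponding system for the sSDLCP with `Â(ΔX̂) + B̂(ΔŶ) = 0`, and the duality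
measures agree.  (Here `ñ` is written `nt`; `B j` denotes `B_{j+1}`, so `B 0 = B₁`,
`d = (d₁, 0, …, 0)`, and `psqrt M` is the positive definite square root `M^{1/2}` of a
positive definite matrix `M`, with `(psqrt M)⁻¹ = M^{−1/2}`.) -/
theorem dual_HKM_corrector_system_transfers_to_sSDLCP
    (n m nt : ℕ) (hm1 : 1 ≤ m) (hmn : m ≤ nt) (hnt : nt = n * (n + 1) / 2)
    (A : Fin m → Mat n) (b : Fin m → ℝ)
    (B : Fin (nt - m + 1) → Mat n) (d1 : ℝ)
    (hAsymm : ∀ i, (A i).IsSymm) (hAli : LinearIndependent ℝ A)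
    (hBsymm : ∀ j, (B j).IsSymm)
    (hd1 : d1 ≠ 0)
    (hB1A : ∀ i, -(d1 * b i) + (B 0 * A i).trace = 0)
    (hBli : LinearIndependent ℝ (fun j : {j : Fin (nt - m + 1) // j ≠ 0} => B j.1))
    (hBspan : ∀ W : Mat n,
        W ∈ Submodule.span ℝ (B '' {j | j ≠ 0}) ↔
          (W.IsSymm ∧ ∀ i, (W * A i).trace = 0))
    (X Y ΔX ΔY : Mat n) (Δy : Fin m → ℝ) (τ κ Δτ Δκ σ μ : ℝ)
    (hX : X.PosDef) (hY : Y.PosDef) (hτ : 0 < τ) (hκ : 0 < κ)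
    (hΔX : ΔX.IsSymm) (hΔY : ΔY.IsSymm)
    (hμ : μ = ((X * Y).trace + τ * κ) / ((n : ℝ) + 1))
    (heq1 : psqrt Y * (X * ΔY + ΔX * Y) * (psqrt Y)⁻¹
          + (psqrt Y)⁻¹ * (ΔY * X + Y * ΔX) * psqrt Y
        = (2 : ℝ) • ((σ * μ) • (1 : Mat n) - psqrt Y * X * psqrt Y))
    (heq2 : κ * Δτ + τ * Δκ = σ * μ - τ * κ)
    (heq3 : ∀ i, (A i * ΔX).trace - b i * Δτ = 0)
    (heq4 : (∑ i, Δy i • A i) + ΔY = 0)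
    (heq5 : Δκ - (∑ i, b i * Δy i) = 0) :
    (dgE X τ * dgE Y κ).trace / ((n : ℝ) + 1) = μ ∧
    (psqrt (dgE Y κ) * (dgE X τ * dgE ΔY Δκ + dgE ΔX Δτ * dgE Y κ) * (psqrt (dgE Y κ))⁻¹
        + (psqrt (dgE Y κ))⁻¹ * (dgE ΔY Δκ * dgE X τ + dgE Y κ * dgE ΔX Δτ) * psqrt (dgE Y κ)
      = (2 : ℝ) • ((σ * ((dgE X τ * dgE Y κ).trace / ((n : ℝ) + 1))) • (1 : Mat (n + 1))
          - psqrt (dgE Y κ) * dgE X τ * psqrt (dgE Y κ))) ∧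
    (∀ idx, Ahat A b (dgE ΔX Δτ) idx +
        Bhat B (fun j => if j = 0 then d1 else 0) (dgE ΔY Δκ) idx = 0) := by
  have htr : (dgE X τ * dgE Y κ).trace = (X * Y).trace + τ * κ := by
    rw [dgE_mul, dgE_trace]
  have hμ' : (dgE X τ * dgE Y κ).trace / ((n : ℝ) + 1) = μ := by rw [htr, hμ]
  have hs : Real.sqrt κ ≠ 0 := by positivity
  refine ⟨hμ', ?_, ?_⟩
  · -- the big matrix equation
    have hss : Real.sqrt κ * Real.sqrt κ = κ := Real.mul_self_sqrt hκ.le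
    rw [psqrt_dgE hY.posSemidef hκ.le,
        dgE_inv (psqrt_det_isUnit hY) hs, hμ',
        show (1 : Mat (n+1)) = dgE 1 1 from dgE_one.symm]
    simp only [dgE_mul, dgE_add, dgE_smul, dgE_sub]
    refine congrArg₂ dgE heq1 ?_
    field_simp
    linear_combination 2 * heq2 + 2 * τ * hss
  · -- the Ahat + Bhat equation
    have hΔY' : ΔY = -∑ i, Δy i • A i := by
      have := heq4
      linear_combination (norm := abel) heq4
    rintro (i | i | j)
    · simp only [Ahat, Bhat, dgE_mul, dgE_trace, add_zero]
      have := heq3 i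
      -- (A i * ΔX).trace + (-(b i)) * Δτ = 0
      nlinarith [heq3 i]
    · simp only [Ahat, Bhat, dgE_cl, add_zero, zero_add]
    · simp only [Ahat, Bhat, dgE_mul, dgE_trace, zero_add]
      have hkey : (B j * ΔY).trace = -∑ i, Δy i * (B j * A i).trace := by
        rw [hΔY', mul_neg, Matrix.trace_neg, Finset.mul_sum]
        congr 1
        rw [Matrix.trace_sum]
        refine Finset.sum_congr rfl fun i _ => ?_
        rw [Matrix.mul_smul, Matrix.trace_smul]
        simp
      by_cases hj : j = 0
      · subst hj
        simp only [if_pos rfl]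
        have hB0 : ∀ i, (B 0 * A i).trace = d1 * b i := fun i => by linarith [hB1A i]
        have hΔκ : Δκ = ∑ i, b i * Δy i := by linarith [heq5]
        rw [hkey, hΔκ, Finset.mul_sum]
        rw [← Finset.sum_neg_distrib, ← Finset.sum_add_distrib]
        apply Finset.sum_eq_zero
        intro i _
        rw [hB0 i]; simp only [if_true]; ring
      · simp only [if_neg hj, mul_zero, add_zero]
        have hmem : B j ∈ Submodule.span ℝ (B '' {j | j ≠ 0}) :=
          Submodule.subset_span ⟨j, hj, rfl⟩
        have h0 := ((hBspan (B j)).mp hmem).2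
        rw [hkey]
        simp [h0]
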